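/- For nonnegative integers m, n: ∑_{k=0}^{m} (k)_{n,λ} = (β_{n+1,λ}(m+1) - β_{n+1,λ})/(n+1), where β_{n,λ}(x) are the degenerate Bernoulli polynomials and β_{n,λ} = β_{n,λ}(0). -/

import Mathlib

open Finset PowerSeries

/-- Degenerate falling factorial `(x)_{n,λ} = x(x-λ)⋯(x-(n-1)λ)`. -/
noncomputable def dfall (l x : ℝ) (n : ℕ) : ℝ := ∏ i ∈ Finset.range n, (x - i * l)

/-- Degenerate Eulerian number `A_λ(n,k) = ∑_{i=0}^k C(n+1,i)(-1)^i (k-i+1)_{n,λ}`. -/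
noncomputable def degEulerianNum (l : ℝ) (n k : ℕ) : ℝ :=
  ∑ i ∈ Finset.range (k+1), ((n+1).choose i : ℝ) * (-1)^i * dfall l ((k : ℝ) - i + 1) n

/-- Degenerate Eulerian polynomial `A_{n,λ}(x) = ∑_{k=0}^n A_λ(n,k) x^k`. -/
noncomputable def degEulerianPoly (l : ℝ) (n : ℕ) (x : ℝ) : ℝ :=
  ∑ k ∈ Finset.range (n+1), degEulerianNum l n k * x^k

/-- Generalized binomial coefficient `binom(y,m) = y(y-1)⋯(y-m+1)/m!`. -/
noncomputable def genBinom (y : ℝ) (m : ℕ) : ℝ :=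
  (∏ i ∈ Finset.range m, (y - i)) / m.factorial

/-- Degenerate exponential `e_λ^x(t) = ∑_k (x)_{k,λ} t^k/k!` as a formal power series. -/
noncomputable def degExp (l x : ℝ) : PowerSeries ℝ :=
  PowerSeries.mk fun k => dfall l x k / k.factorial

/-- Degenerate Stirling number of the second kind (explicit formula). -/
noncomputable def degStirling2 (l : ℝ) (n k : ℕ) : ℝ :=
  (-1)^k / k.factorial * ∑ j ∈ Finset.range (k+1), (-1)^j * (k.choose j : ℝ) * dfall l j n

/-!
The degenerate exponentials satisfy `e_λ^x(t) e_λ^y(t) = e_λ^{x+y}(t)` (a Vandermonde identity for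
`(x)_{n,λ}`), so `e_λ^k(t) = e_λ(t)^k` and the geometric sum gives
`(e_λ(t) - 1) ∑_{k=0}^m e_λ^k(t) = e_λ^{m+1}(t) - 1`. Multiplying by `t` and using the defining
relation of `β_{n,λ}(x)` at `x = m + 1` and `x = 0`, then cancelling the nonzero series
`e_λ(t) - 1`, identifies `t ∑_{k=0}^m e_λ^k(t)` with `∑_n (β_{n,λ}(m+1) - β_{n,λ}) t^n/n!`;
comparing the coefficients of `t^{n+1}` gives the formula.
-/

lemma dfall_zero (l x : ℝ) : dfall l x 0 = 1 := by simp [dfall]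

lemma dfall_succ (l x : ℝ) (n : ℕ) : dfall l x (n + 1) = dfall l x n * (x - n * l) := by
  simp [dfall, prod_range_succ]

lemma dfall_zero_left_succ (l : ℝ) (n : ℕ) : dfall l 0 (n + 1) = 0 :=
  prod_eq_zero (mem_range.mpr n.succ_pos) (by simp)

lemma dfall_add (l x y : ℝ) (n : ℕ) :
    dfall l (x + y) n =
      ∑ ij ∈ antidiagonal n, (n.choose ij.1 : ℝ) * (dfall l x ij.1 * dfall l y ij.2) := by
  induction n with
  | zero => simp [dfall_zero]
  | succ n ih =>
    rw [sum_antidiagonal_choose_succ_mul (fun i j => dfall l x i * dfall l y j), ← sum_add_distrib,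
      dfall_succ, ih, sum_mul]
    refine sum_congr rfl fun ij hij => ?_
    rw [HasAntidiagonal.mem_antidiagonal] at hij
    -- on the antidiagonal, `x + y - nλ = (x - iλ) + (y - jλ)` splits the new factor
    have hn : (n : ℝ) = ij.1 + ij.2 := by exact_mod_cast hij.symm
    rw [Nat.choose_symm_of_eq_add hij.symm, dfall_succ, dfall_succ, hn]
    ring

lemma coeff_degExp (l x : ℝ) (n : ℕ) : coeff n (degExp l x) = dfall l x n / n.factorial :=
  coeff_mk _ _

lemma degExp_add (l x y : ℝ) : degExp l (x + y) = degExp l x * degExp l y := by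
  ext n
  rw [coeff_mul, coeff_degExp, dfall_add, sum_div]
  refine sum_congr rfl fun ij hij => ?_
  rw [HasAntidiagonal.mem_antidiagonal] at hij
  subst hij
  rw [coeff_degExp, coeff_degExp, Nat.cast_add_choose]
  field_simp

lemma degExp_zero (l : ℝ) : degExp l 0 = 1 := by
  ext n
  cases n with
  | zero => simp [coeff_degExp, dfall_zero]
  | succ n => simp [coeff_degExp, dfall_zero_left_succ]

lemma degExp_natCast (l : ℝ) (k : ℕ) : degExp l k = degExp l 1 ^ k := by
  induction k with
  | zero => simp [degExp_zero]
  | succ k ih => rw [Nat.cast_succ, degExp_add, ih, pow_succ]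

lemma degExp_one_sub_one_ne_zero (l : ℝ) : degExp l 1 - 1 ≠ 0 := by
  intro h
  have h1 := congrArg (coeff 1) h
  simp [coeff_degExp, dfall] at h1

lemma X_mul_sum_degExp (l : ℝ) (B : ℝ → ℕ → ℝ)
    (hB : ∀ x : ℝ, (X : PowerSeries ℝ) * degExp l x =
      (degExp l 1 - 1) * PowerSeries.mk (fun n => B x n / n.factorial))
    (m : ℕ) :
    X * ∑ k ∈ range (m + 1), degExp l k =
      PowerSeries.mk (fun n => (B ((m : ℝ) + 1) n - B 0 n) / n.factorial) := by
  have hmk : PowerSeries.mk (fun n => (B ((m : ℝ) + 1) n - B 0 n) / n.factorial) =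
      PowerSeries.mk (fun n => B ((m : ℝ) + 1) n / n.factorial) -
        PowerSeries.mk (fun n => B 0 n / n.factorial) := by
    ext n
    simp only [coeff_mk, map_sub, sub_div]
  apply mul_left_cancel₀ (degExp_one_sub_one_ne_zero l)
  calc (degExp l 1 - 1) * (X * ∑ k ∈ range (m + 1), degExp l k)
      = X * ((degExp l 1 - 1) * ∑ k ∈ range (m + 1), degExp l 1 ^ k) := by
        simp only [degExp_natCast]; ring
    _ = X * degExp l ((m : ℝ) + 1) - X * degExp l 0 := by
        rw [mul_geom_sum, ← degExp_natCast, degExp_zero, Nat.cast_succ]; ring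
    _ = _ := by rw [hB, hB, hmk, mul_sub]

/-- with `B x n = β_{n,λ}(x)` the degenerate Bernoulli polynomials
(defined by `t·e_λ^x(t) = (e_λ(t)-1)·∑_n β_{n,λ}(x) t^n/n!`), for `m, n ≥ 0`:
`∑_{k=0}^m (k)_{n,λ} = (β_{n+1,λ}(m+1) - β_{n+1,λ})/(n+1)`. -/
theorem stmt13 (l : ℝ) (B : ℝ → ℕ → ℝ)
    (hB : ∀ x : ℝ, (PowerSeries.X : PowerSeries ℝ) * degExp l x =
      (degExp l 1 - 1) * PowerSeries.mk (fun n => B x n / n.factorial))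
    (m n : ℕ) :
    ∑ k ∈ Finset.range (m + 1), dfall l k n =
      (B ((m : ℝ) + 1) (n + 1) - B 0 (n + 1)) / (n + 1) := by
  have h := congrArg (coeff (n + 1)) (X_mul_sum_degExp l B hB m)
  rw [coeff_succ_X_mul, map_sum, coeff_mk] at h
  simp only [coeff_degExp, ← sum_div, Nat.factorial_succ, Nat.cast_mul, Nat.cast_succ] at h
  field_simp at h ⊢
  linear_combination h
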